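/- arXiv:2601.03970 — 2 statements merged into one kernel-verified Lean document; each statement's English description precedes it below -/
import Mathlib

section
/- For a semi-standard Young tableau L, the row-word of the labeled tableau φ_T(L) equals the labeling of the row-word of L: w_row(φ_T(L)) = φ_w(w_row(L)). -/
open scoped BigOperators

/-! ## Words and Knuth relations -/

/-- Knuth relation (K): `u·bca·v ~ u·bac·v` with `a < b ≤ c`. -/
def KnuthK {α : Type*} [LinearOrder α] (w w' : List α) : Prop :=
  ∃ (u v : List α) (a b c : α), a < b ∧ b ≤ c ∧
    w = u ++ [b, c, a] ++ v ∧ w' = u ++ [b, a, c] ++ v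

/-- Knuth relation (K'): `u·acb·v ~ u·cab·v` with `a ≤ b < c`. -/
def KnuthK' {α : Type*} [LinearOrder α] (w w' : List α) : Prop :=
  ∃ (u v : List α) (a b c : α), a ≤ b ∧ b < c ∧
    w = u ++ [a, c, b] ++ v ∧ w' = u ++ [c, a, b] ++ v

/-- One step of a Knuth relation, in either direction. -/
def KnuthRel {α : Type*} [LinearOrder α] (w w' : List α) : Prop :=
  KnuthK w w' ∨ KnuthK w' w ∨ KnuthK' w w' ∨ KnuthK' w' w

/-- Knuth equivalence: the reflexive-transitive closure of the Knuth relations. -/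
def KnuthEquiv {α : Type*} [LinearOrder α] : List α → List α → Prop :=
  Relation.ReflTransGen KnuthRel

/-- The labeled alphabet Ñ = ℕ ×ₗ ℕ, ordered first by the letter, then by the label. -/
abbrev LblN := Lex (ℕ × ℕ)

instance : Inhabited LblN := ⟨toLex default⟩

/-- The labeling map φ_w : each occurrence of the integer `k` gets subscripts 1, 2, ...
from left to right. -/
def phiW (w : List ℕ) : List LblN :=
  w.zipIdx.map fun p => toLex (p.1, (w.take p.2).count p.1 + 1)

/-- The label-forgetting map, sending `k_l` to `k`. -/
def forgetW (w : List LblN) : List ℕ := w.map fun x => (ofLex x).1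

/-! ## Partitions, skew shapes, tableaux -/

/-- A partition, recorded as its sequence of (1-indexed) row lengths, with `p 0 = 0`. -/
def IsPartition (p : ℕ → ℕ) : Prop :=
  p 0 = 0 ∧ (∀ i, 1 ≤ i → p (i + 1) ≤ p i) ∧ ∃ N, ∀ i, N ≤ i → p i = 0

/-- The empty partition. -/
def zeroPart : ℕ → ℕ := fun _ => 0

/-- The boxes of the skew diagram λ/μ (rows and columns indexed from 1). -/
def cells (lam mu : ℕ → ℕ) : Set (ℕ × ℕ) :=
  {c | 1 ≤ c.1 ∧ mu c.1 < c.2 ∧ c.2 ≤ lam c.1}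

/-- The semistandardness condition for a filling of λ/μ: rows weakly increase and
columns strictly increase. -/
def IsSSYT {α : Type*} [Preorder α] (lam mu : ℕ → ℕ) (T : ℕ × ℕ → α) : Prop :=
  (∀ i j, (i, j) ∈ cells lam mu → (i, j + 1) ∈ cells lam mu → T (i, j) ≤ T (i, j + 1)) ∧
  (∀ i j, (i, j) ∈ cells lam mu → (i + 1, j) ∈ cells lam mu → T (i, j) < T (i + 1, j))

/-- The conjugate partition: `conj p j = #{i ≥ 1 | p i ≥ j}`. -/
noncomputable def conj (p : ℕ → ℕ) (j : ℕ) : ℕ :=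
  Set.ncard {i : ℕ | 1 ≤ i ∧ j ≤ p i}

/-- The number of (nonempty) rows of a shape. -/
noncomputable def numRows (lam : ℕ → ℕ) : ℕ :=
  sInf {N | ∀ i, N < i → lam i = 0}

/-- The i-th row of a tableau, read left to right. -/
def rowOf {α : Type*} (lam mu : ℕ → ℕ) (T : ℕ × ℕ → α) (i : ℕ) : List α :=
  (List.range (lam i - mu i)).map fun k => T (i, mu i + k + 1)

/-- Rows `n, n-1, ..., 1` of a tableau, concatenated. -/
def rowWordUpTo {α : Type*} (lam mu : ℕ → ℕ) (T : ℕ × ℕ → α) : ℕ → List α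
  | 0 => []
  | n + 1 => rowOf lam mu T (n + 1) ++ rowWordUpTo lam mu T n

/-- The row word of a tableau: rows read left to right, from the bottom row up. -/
noncomputable def rowWord {α : Type*} (lam mu : ℕ → ℕ) (T : ℕ × ℕ → α) : List α :=
  rowWordUpTo lam mu T (numRows lam)

/-- The rectification of a word: the (shape, tableau) pair of a normal-shape
semistandard tableau whose row word is Knuth equivalent to the given word. -/
noncomputable def rectPair {α : Type*} [LinearOrder α] [Inhabited α] (w : List α) :
    (ℕ → ℕ) × (ℕ × ℕ → α) := by
  classical
  exact if h : ∃ p : (ℕ → ℕ) × (ℕ × ℕ → α),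
      IsPartition p.1 ∧ IsSSYT p.1 zeroPart p.2 ∧ KnuthEquiv (rowWord p.1 zeroPart p.2) w
    then h.choose else (zeroPart, fun _ => default)

/-- The shape of the rectification of a word. -/
noncomputable def rectShape {α : Type*} [LinearOrder α] [Inhabited α] (w : List α) : ℕ → ℕ :=
  (rectPair w).1

/-- The tableau of the rectification of a word. -/
noncomputable def rectTab {α : Type*} [LinearOrder α] [Inhabited α] (w : List α) :
    ℕ × ℕ → α :=
  (rectPair w).2

/-- The labeling map φ_T on tableaux: each occurrence of the integer `k` gets subscripts
1, 2, ... from the bottom row up, left to right within each row. -/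
noncomputable def phiT (lam mu : ℕ → ℕ) (T : ℕ × ℕ → ℕ) : ℕ × ℕ → LblN :=
  fun c => toLex (T c,
    Set.ncard {d ∈ cells lam mu | T d = T c ∧ (c.1 < d.1 ∨ (d.1 = c.1 ∧ d.2 < c.2))} + 1)

/-! ## Arms and body -/

/-- `∑_{i ≥ 2} (λ_i − μ_i)`. -/
noncomputable def tailSum (lam mu : ℕ → ℕ) : ℕ :=
  ∑ᶠ i : ℕ, if 2 ≤ i then lam i - mu i else 0

/-- `m = min{λ₂, Σ_{i≥2}(λᵢ − μᵢ)}`. -/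
noncomputable def armM (lam mu : ℕ → ℕ) : ℕ := min (lam 2) (tailSum lam mu)

/-- `n = min{λ'₂, Σ_{j≥2}(λ'ⱼ − μ'ⱼ)}`. -/
noncomputable def armN (lam mu : ℕ → ℕ) : ℕ := min (conj lam 2) (tailSum (conj lam) (conj mu))

/-- The right-arm of λ/μ: boxes `(1, m+μ₁), ..., (1, λ₁)`. -/
noncomputable def rightArm (lam mu : ℕ → ℕ) : Set (ℕ × ℕ) :=
  {c | c.1 = 1 ∧ armM lam mu + mu 1 ≤ c.2 ∧ c.2 ≤ lam 1}

/-- The left-arm of λ/μ: boxes `(n+μ'₁, 1), ..., (λ'₁, 1)`. -/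
noncomputable def leftArm (lam mu : ℕ → ℕ) : Set (ℕ × ℕ) :=
  {c | c.2 = 1 ∧ armN lam mu + conj mu 1 ≤ c.1 ∧ c.1 ≤ conj lam 1}

/-- The body of λ/μ: the boxes that are in neither arm. -/
noncomputable def body (lam mu : ℕ → ℕ) : Set (ℕ × ℕ) :=
  cells lam mu \ (rightArm lam mu ∪ leftArm lam mu)

/-! ## Semistandard tableaux over positive integers, Schur multiple zeta functions -/

/-- Semistandard Young tableaux of shape λ/μ with positive integer entries,
normalized to be `0` outside the diagram. -/
def SSYTset (lam mu : ℕ → ℕ) : Set (ℕ × ℕ → ℕ) :=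
  {T | IsSSYT lam mu T ∧ (∀ c ∈ cells lam mu, 1 ≤ T c) ∧ ∀ c, c ∉ cells lam mu → T c = 0}

/-- The Schur multiple zeta function of shape λ/μ. -/
noncomputable def schurZeta (lam mu : ℕ → ℕ) (s : ℕ × ℕ → ℂ) : ℂ :=
  ∑' M : SSYTset lam mu, ∏ᶠ c ∈ cells lam mu, ((M : ℕ × ℕ → ℕ) c : ℂ) ^ (-(s c))

/-- A corner of λ/μ. -/
def ShapeCorner (lam mu : ℕ → ℕ) (c : ℕ × ℕ) : Prop :=
  c ∈ cells lam mu ∧ (c.1 + 1, c.2) ∉ cells lam mu ∧ (c.1, c.2 + 1) ∉ cells lam mu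

/-- The domain of absolute convergence `W_{λ/μ}`. -/
def InDomain (lam mu : ℕ → ℕ) (s : ℕ × ℕ → ℂ) : Prop :=
  ∀ c ∈ cells lam mu, 1 ≤ (s c).re ∧ (ShapeCorner lam mu c → 1 < (s c).re)

/-! ## The shape μ * ν -/

/-- The outer shape ψ of μ * ν: `ψᵢ = μ₁ + νᵢ` for `i ≤ ℓ(ν)`, `ψᵢ = μ_{i−ℓ(ν)}` else. -/
noncomputable def starOuter (mu nu : ℕ → ℕ) : ℕ → ℕ := fun i =>
  if i = 0 then 0 else if i ≤ conj nu 1 then mu 1 + nu i else mu (i - conj nu 1)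

/-- The inner (rectangle) shape of μ * ν : μ₁ columns and ν'₁ rows. -/
noncomputable def starInner (mu nu : ℕ → ℕ) : ℕ → ℕ := fun i =>
  if 1 ≤ i ∧ i ≤ conj nu 1 then mu 1 else 0

/-- The filling `S * T` of μ * ν : `S` (shape μ) below, `T` (shape ν) to the right. -/
noncomputable def starTab {γ : Type*} (mu nu : ℕ → ℕ) (s t : ℕ × ℕ → γ) : ℕ × ℕ → γ :=
  fun c => if c.1 ≤ conj nu 1 then t (c.1, c.2 - mu 1) else s (c.1 - conj nu 1, c.2)

/-! ## Schur functions as formal power series, Littlewood–Richardson coefficients -/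

/-- The (skew) Schur function `s_{λ/μ}` as a formal power series in variables
`x₀, x₁, x₂, ...` : the coefficient of a monomial `d` is the number of semistandard
tableaux of shape λ/μ and content `d`. -/
noncomputable def schurSeries (lam mu : ℕ → ℕ) : MvPowerSeries ℕ ℤ :=
  fun d => (Set.ncard {T ∈ SSYTset lam mu |
    ∀ k : ℕ, d k = Set.ncard {c ∈ cells lam mu | T c = k}} : ℤ)

/-- The power series `Σ_λ c_λ · s_λ`, the sum ranging over all partitions λ. -/
noncomputable def seriesSum (cc : (ℕ → ℕ) → ℕ) : MvPowerSeries ℕ ℤ :=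
  fun d => ∑ᶠ lam ∈ {p : ℕ → ℕ | IsPartition p}, (cc lam : ℤ) * schurSeries lam zeroPart d

/-! ## Jeu de taquin slides -/

/-- One elementary jeu de taquin slide on a configuration (hole, filled region, filling):
the smaller of the entries to the right of and below the hole moves into the hole
(the one below moving in case of a tie), and the hole moves to the vacated box. -/
inductive JdtStep {α : Type*} [LinearOrder α] :
    ((ℕ × ℕ) × Set (ℕ × ℕ) × (ℕ × ℕ → α)) → ((ℕ × ℕ) × Set (ℕ × ℕ) × (ℕ × ℕ → α)) → Prop
  | right (h : ℕ × ℕ) (S : Set (ℕ × ℕ)) (T : ℕ × ℕ → α)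
      (hr : (h.1, h.2 + 1) ∈ S)
      (hcmp : (h.1 + 1, h.2) ∈ S → T (h.1, h.2 + 1) < T (h.1 + 1, h.2)) :
      JdtStep (h, S, T)
        ((h.1, h.2 + 1), insert h (S \ {(h.1, h.2 + 1)}),
          Function.update T h (T (h.1, h.2 + 1)))
  | down (h : ℕ × ℕ) (S : Set (ℕ × ℕ)) (T : ℕ × ℕ → α)
      (hd : (h.1 + 1, h.2) ∈ S)
      (hcmp : (h.1, h.2 + 1) ∈ S → T (h.1 + 1, h.2) ≤ T (h.1, h.2 + 1)) :
      JdtStep (h, S, T)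
        ((h.1 + 1, h.2), insert h (S \ {(h.1 + 1, h.2)}),
          Function.update T h (T (h.1 + 1, h.2)))

/-- An inside corner of λ/μ: a corner `c` of the deleted diagram μ. -/
def InsideCorner (lam mu : ℕ → ℕ) (c : ℕ × ℕ) : Prop :=
  1 ≤ c.1 ∧ 1 ≤ c.2 ∧ c.2 = mu c.1 ∧ mu (c.1 + 1) < c.2

/-- A full jeu de taquin slide from an inside corner, acting on (outer shape, inner
shape, filling) triples: the hole starts at an inside corner `c`, elementary slides are
repeated until the hole has no neighbor to its right or below, and then the hole
(at an outside corner `h`) is removed. -/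
def SlideRel {α : Type*} [LinearOrder α] :
    ((ℕ → ℕ) × (ℕ → ℕ) × (ℕ × ℕ → α)) → ((ℕ → ℕ) × (ℕ → ℕ) × (ℕ × ℕ → α)) → Prop :=
  fun p q =>
    ∃ c h : ℕ × ℕ, InsideCorner p.1 p.2.1 c ∧
      Relation.ReflTransGen JdtStep (c, cells p.1 p.2.1, p.2.2)
        (h, insert c (cells p.1 p.2.1) \ {h}, q.2.2) ∧
      (h.1, h.2 + 1) ∉ insert c (cells p.1 p.2.1) ∧
      (h.1 + 1, h.2) ∉ insert c (cells p.1 p.2.1) ∧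
      h.2 = p.1 h.1 ∧
      q.1 = Function.update p.1 h.1 (h.2 - 1) ∧
      q.2.1 = Function.update p.2.1 c.1 (c.2 - 1)


/-!
Both labelings number the occurrences of each letter in the order in which the row word reads
the boxes: `phiT` labels a box `c` by one plus the number of boxes with the same entry lying in a
lower row, or in the same row further left, and these are exactly the boxes read before `c`.
Listing the boxes in reading order, the label of the `i`-th box under either map is therefore one
plus the number of boxes among the first `i` that carry the same entry; for `phiW` this uses that
the first `i` boxes are exactly those read before the `i`-th one.
-/

namespace List

variable {β : Type*}

theorem take_eq_filter_of_pairwise {r : β → β → Prop} [DecidableRel r]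
    (hr : ∀ a b, r a b → ¬ r b a) {l : List β} (hl : l.Pairwise r) (i : ℕ) (hi : i < l.length) :
    l.take i = l.filter fun d => r d l[i] := by
  have hsplit : l = l.take i ++ l[i] :: l.drop (i + 1) := by
    rw [← drop_eq_getElem_cons hi, take_append_drop]
  generalize l.take i = u, l.drop (i + 1) = v, l[i] = a at hsplit
  subst hsplit
  obtain ⟨-, -, hbefore⟩ := pairwise_append.mp hl
  have hafter := (pairwise_cons.mp (pairwise_append.mp hl).2.1).1
  rw [filter_append, filter_cons_of_neg fun h => hr a a (by simpa using h) (by simpa using h),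
    filter_eq_self.mpr fun x hx => by simpa using hbefore x hx a mem_cons_self,
    filter_eq_nil_iff.mpr fun y hy => by simpa using hr a y (hafter y hy), append_nil]

theorem ncard_setOf_mem_and {l : List β} (hl : l.Nodup) (p : β → Prop) [DecidablePred p] :
    {d | d ∈ l ∧ p d}.ncard = l.countP p := by
  classical
  have : {d | d ∈ l ∧ p d} = ((l.filter p).toFinset : Set β) := by ext; simp
  rw [this, Set.ncard_coe_finset, toFinset_card_of_nodup (hl.filter p), countP_eq_length_filter]

end List

theorem phiW_map {β : Type*} {r : β → β → Prop} [DecidableRel r]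
    (hr : ∀ a b, r a b → ¬ r b a) {l : List β} (hl : l.Pairwise r) (f : β → ℕ) :
    phiW (l.map f) = l.map fun c => toLex (f c, l.countP (fun d => f d = f c ∧ r d c) + 1) := by
  refine List.ext_getElem (by simp [phiW]) fun i h₁ h₂ => ?_
  have hi : i < l.length := by simpa using h₂
  simp only [phiW, List.getElem_map, List.getElem_zipIdx, zero_add, ← List.map_take,
    List.take_eq_filter_of_pairwise hr hl i hi, List.count_eq_countP, List.countP_map,
    List.countP_filter]
  exact congrArg (toLex <| (f l[i], · + 1)) <| List.countP_congr fun d _ => by simp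

def rowCells (lam mu : ℕ → ℕ) (i : ℕ) : List (ℕ × ℕ) :=
  (List.range (lam i - mu i)).map fun k => (i, mu i + k + 1)

def readingCells (lam mu : ℕ → ℕ) : ℕ → List (ℕ × ℕ)
  | 0 => []
  | n + 1 => rowCells lam mu (n + 1) ++ readingCells lam mu n

def ReadsBefore (d c : ℕ × ℕ) : Prop := c.1 < d.1 ∨ (d.1 = c.1 ∧ d.2 < c.2)

instance : DecidableRel ReadsBefore := fun _ _ => inferInstanceAs (Decidable (_ ∨ _))

theorem ReadsBefore.asymm {d c : ℕ × ℕ} (h : ReadsBefore d c) : ¬ ReadsBefore c d := by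
  unfold ReadsBefore at *; omega

section ReadingCells

variable {lam mu : ℕ → ℕ}

theorem rowWordUpTo_eq_map {α : Type*} (T : ℕ × ℕ → α) (n : ℕ) :
    rowWordUpTo lam mu T n = (readingCells lam mu n).map T := by
  induction n with
  | zero => rfl
  | succ n ih => simp [rowWordUpTo, readingCells, ih, rowOf, rowCells]

theorem mem_rowCells {i a j : ℕ} : (a, j) ∈ rowCells lam mu i ↔ a = i ∧ mu i < j ∧ j ≤ lam i := by
  simp only [rowCells, List.mem_map, List.mem_range, Prod.mk.injEq]
  constructor
  · rintro ⟨k, hk, rfl, rfl⟩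
    omega
  · rintro ⟨rfl, hj, hj'⟩
    exact ⟨j - mu a - 1, by omega, rfl, by omega⟩

theorem mem_readingCells {n : ℕ} {d : ℕ × ℕ} :
    d ∈ readingCells lam mu n ↔ d ∈ cells lam mu ∧ d.1 ≤ n := by
  obtain ⟨a, j⟩ := d
  induction n with
  | zero => simp only [readingCells, cells, List.not_mem_nil, Set.mem_ofPred_eq, false_iff]; omega
  | succ n ih =>
    rw [readingCells, List.mem_append, ih, mem_rowCells]
    rcases eq_or_ne a (n + 1) with rfl | ha
    · simp [cells]
    · simp only [cells, Set.mem_ofPred_eq]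
      omega

theorem mem_readingCells_iff_mem_cells {n : ℕ} (hn : ∀ i, n < i → lam i = 0) {d : ℕ × ℕ} :
    d ∈ readingCells lam mu n ↔ d ∈ cells lam mu := by
  refine mem_readingCells.trans ⟨And.left, fun hd => ⟨hd, ?_⟩⟩
  by_contra! h
  obtain ⟨-, hmu, hle⟩ := hd
  rw [hn d.1 h] at hle
  omega

theorem pairwise_readingCells (n : ℕ) : (readingCells lam mu n).Pairwise ReadsBefore := by
  induction n with
  | zero => exact List.Pairwise.nil
  | succ n ih =>
    refine List.pairwise_append.mpr ⟨?_, ih, fun c hc d hd => Or.inl ?_⟩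
    · exact List.pairwise_map.mpr (List.pairwise_lt_range.imp fun h => Or.inr ⟨rfl, by omega⟩)
    · have := (mem_rowCells.mp hc).1
      have := (mem_readingCells.mp hd).2
      omega

theorem nodup_readingCells (n : ℕ) : (readingCells lam mu n).Nodup :=
  (pairwise_readingCells n).imp fun h => by
    rintro rfl
    exact h.asymm h

theorem phiT_eq_countP {n : ℕ} (hn : ∀ i, n < i → lam i = 0) (L : ℕ × ℕ → ℕ) (c : ℕ × ℕ) :
    phiT lam mu L c =
      toLex (L c, (readingCells lam mu n).countP (fun d => L d = L c ∧ ReadsBefore d c) + 1) := by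
  have hset : {d ∈ cells lam mu | L d = L c ∧ ReadsBefore d c} =
      {d | d ∈ readingCells lam mu n ∧ (L d = L c ∧ ReadsBefore d c)} := by
    simp only [mem_readingCells_iff_mem_cells hn]
  rw [phiT, ← List.ncard_setOf_mem_and (nodup_readingCells n), ← hset]
  rfl

theorem rowWordUpTo_phiT {n : ℕ} (hn : ∀ i, n < i → lam i = 0) (L : ℕ × ℕ → ℕ) :
    rowWordUpTo lam mu (phiT lam mu L) n = phiW (rowWordUpTo lam mu L n) := by
  rw [rowWordUpTo_eq_map, rowWordUpTo_eq_map, funext (phiT_eq_countP hn L),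
    phiW_map (fun _ _ => ReadsBefore.asymm) (pairwise_readingCells n)]

end ReadingCells

theorem rowWord_phiT_general (lam mu : ℕ → ℕ) (hlam : IsPartition lam) (L : ℕ × ℕ → ℕ) :
    rowWord lam mu (phiT lam mu L) = phiW (rowWord lam mu L) := by
  obtain ⟨N, hN⟩ := hlam.2.2
  have hrows : numRows lam ∈ {N | ∀ i, N < i → lam i = 0} :=
    Nat.sInf_mem ⟨N, fun i hi => hN i hi.le⟩
  exact rowWordUpTo_phiT hrows L

theorem rowWord_phiT (lam mu : ℕ → ℕ) (hlam : IsPartition lam) (hmu : IsPartition mu)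
    (hsub : ∀ i, mu i ≤ lam i) (L : ℕ × ℕ → ℕ) (hL : L ∈ SSYTset lam mu) :
    rowWord lam mu (phiT lam mu L) = phiW (rowWord lam mu L) :=
  rowWord_phiT_general lam mu hlam L
end

section
/- In a skew tableau with distinct entries, performing jeu de taquin slides that clear all rows strictly below the first row yields a tableau whose second row has length at most min{λ₂, Σ_{i≥2}(λᵢ − μᵢ)}, and whose first row is unchanged. -/
open scoped BigOperators

/-! A slide from the inside corner `c` ending at the outside corner `h` removes `c` from `μ` and
`h` from `λ`, and its hole only moves right and down, so `c ≤ h` and entries in rows above `c`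
are untouched. Along the chain `μ₁` can only decrease, so if it ends at its initial value no
slide starts in the first row: every slide has `2 ≤ c.1 ≤ h.1`. Hence `λ₁` and the first row
of the filling are fixed, and each slide trades a box for a box in rows `≥ 2`, so
`Σ_{i≥2}(λᵢ − μᵢ)` is invariant. Finally `ψ₂ = ψ₂ − μ'₂` is a term of that sum, and `ψ ≤ λ`. -/

open Function Relation

theorem finsum_update_add {ι M : Type*} [AddCommMonoid M] [DecidableEq ι] {f : ι → M}
    (hf : (support f).Finite) (a : ι) (b : M) :
    ∑ᶠ i, update f a b i + f a = ∑ᶠ i, f i + b := by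
  set s := insert a hf.toFinset
  have ha : a ∈ s := Finset.mem_insert_self _ _
  have hfs : support f ⊆ s := fun i hi => Finset.mem_insert_of_mem (hf.mem_toFinset.2 hi)
  have hus : support (update f a b) ⊆ s := by
    intro i hi
    rcases eq_or_ne i a with rfl | hia
    · exact ha
    · exact hfs (by rwa [mem_support, update_of_ne hia] at hi)
  rw [finsum_eq_sum_of_support_subset _ hus, finsum_eq_sum_of_support_subset _ hfs,
    Finset.sum_update_of_mem ha, Finset.sum_eq_add_sum_sdiff_singleton_of_mem ha]
  abel

lemma support_subset_of_le {ι : Type*} {f g : ι → ℕ} (h : f ≤ g) : support f ⊆ support g :=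
  fun i hi => (Nat.pos_of_ne_zero hi).trans_le (h i) |>.ne'

lemma IsPartition.support_finite {p : ℕ → ℕ} (hp : IsPartition p) : (support p).Finite := by
  obtain ⟨-, -, N, hN⟩ := hp
  exact (Set.finite_Iio N).subset fun i hi => by_contra fun hiN => hi (hN i (not_lt.1 hiN))

lemma support_tailSum_summand_finite {L M : ℕ → ℕ} (hL : (support L).Finite) :
    (support fun i => if 2 ≤ i then L i - M i else 0).Finite :=
  hL.subset fun i hi hLi => hi (by simp [hLi])

lemma tailSum_update {L M : ℕ → ℕ} (hL : (support L).Finite) {a : ℕ} (ha : 2 ≤ a) (x y : ℕ) :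
    tailSum (update L a x) (update M a y) + (L a - M a) = tailSum L M + (x - y) := by
  have hfin := support_tailSum_summand_finite (M := M) hL
  have hupd : (fun i => if 2 ≤ i then update L a x i - update M a y i else 0) =
      update (fun i => if 2 ≤ i then L i - M i else 0) a (x - y) := by
    funext i
    rcases eq_or_ne i a with rfl | hia
    · simp [ha]
    · simp [hia]
  unfold tailSum
  rw [hupd]
  simpa [ha] using finsum_update_add hfin a (x - y)

lemma le_tailSum {L M : ℕ → ℕ} (hL : (support L).Finite) {i : ℕ} (hi : 2 ≤ i) :
    L i - M i ≤ tailSum L M := by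
  have hfin := support_tailSum_summand_finite (M := M) hL
  have h := single_le_finsum i hfin fun j => Nat.zero_le _
  rwa [if_pos hi] at h

namespace JdtStep

variable {α : Type*} [LinearOrder α] {s t : (ℕ × ℕ) × Set (ℕ × ℕ) × (ℕ × ℕ → α)}

lemma hole_le (hst : JdtStep s t) : s.1 ≤ t.1 := by
  cases hst <;> simp [Prod.le_def]

lemma insert_hole_eq (hst : JdtStep s t) : insert t.1 t.2.1 = insert s.1 s.2.1 := by
  cases hst with
  | right h S T hr => rw [Set.insert_comm, Set.insert_sdiff_singleton, Set.insert_eq_of_mem hr]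
  | down h S T hd => rw [Set.insert_comm, Set.insert_sdiff_singleton, Set.insert_eq_of_mem hd]

lemma apply_eq_of_ne (hst : JdtStep s t) {x : ℕ × ℕ} (hx : x ≠ s.1) : t.2.2 x = s.2.2 x := by
  cases hst <;> exact update_of_ne hx _ _

lemma hole_le_of_reflTransGen (hst : ReflTransGen JdtStep s t) : s.1 ≤ t.1 := by
  induction hst with
  | refl => exact le_rfl
  | tail _ hut ih => exact ih.trans hut.hole_le

lemma insert_hole_eq_of_reflTransGen (hst : ReflTransGen JdtStep s t) :
    insert t.1 t.2.1 = insert s.1 s.2.1 := by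
  induction hst with
  | refl => rfl
  | tail _ hut ih => exact hut.insert_hole_eq.trans ih

lemma apply_eq_of_reflTransGen (hst : ReflTransGen JdtStep s t) {x : ℕ × ℕ}
    (hx : x.1 < s.1.1) : t.2.2 x = s.2.2 x := by
  induction hst with
  | refl => rfl
  | tail hsu hut ih =>
    rw [hut.apply_eq_of_ne, ih]
    rintro rfl
    exact hx.not_ge (hole_le_of_reflTransGen hsu).1

end JdtStep

lemma InsideCorner.two_le_fst {L M : ℕ → ℕ} {c : ℕ × ℕ} (hc : InsideCorner L M c)
    (h : update M c.1 (c.2 - 1) 1 = M 1) : 2 ≤ c.1 := by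
  obtain ⟨c1, c2⟩ := c
  obtain ⟨hc1, hc2, hcM, -⟩ := hc
  dsimp only at hc1 hc2 hcM h ⊢
  by_contra hlt
  obtain rfl : c1 = 1 := by omega
  rw [update_self] at h
  omega

namespace SlideRel

variable {α : Type*} [LinearOrder α] {p q : (ℕ → ℕ) × (ℕ → ℕ) × (ℕ × ℕ → α)}

lemma exists_corners (hs : SlideRel p q) :
    ∃ c h : ℕ × ℕ, InsideCorner p.1 p.2.1 c ∧ c ≤ h ∧ h ∈ insert c (cells p.1 p.2.1) ∧
      h.2 = p.1 h.1 ∧ q.1 = update p.1 h.1 (h.2 - 1) ∧ q.2.1 = update p.2.1 c.1 (c.2 - 1) ∧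
      ∀ x : ℕ × ℕ, x.1 < c.1 → q.2.2 x = p.2.2 x := by
  obtain ⟨c, h, hc, hjdt, -, -, hhL, hL, hM⟩ := hs
  have hmem : insert h (insert c (cells p.1 p.2.1) \ {h}) = insert c (cells p.1 p.2.1) :=
    JdtStep.insert_hole_eq_of_reflTransGen hjdt
  exact ⟨c, h, hc, JdtStep.hole_le_of_reflTransGen hjdt, hmem ▸ Set.mem_insert h _, hhL, hL, hM,
    fun x hx => JdtStep.apply_eq_of_reflTransGen hjdt hx⟩

lemma outer_le (hs : SlideRel p q) : q.1 ≤ p.1 := by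
  obtain ⟨c, h, -, -, -, hhL, hL, -⟩ := hs.exists_corners
  rw [hL, update_le_self_iff]
  omega

lemma inner_le (hs : SlideRel p q) : q.2.1 ≤ p.2.1 := by
  obtain ⟨c, h, ⟨-, -, hcM, -⟩, -, -, -, -, hM, -⟩ := hs.exists_corners
  rw [hM, update_le_self_iff]
  omega

lemma inner_le_outer (hs : SlideRel p q) (hle : p.2.1 ≤ p.1) : q.2.1 ≤ q.1 := by
  obtain ⟨c, h, ⟨-, -, hcM, -⟩, hch, hh, -, hL, hM, -⟩ := hs.exists_corners
  intro i
  rw [hL, hM]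
  rcases hh with rfl | ⟨-, hMh, -⟩
  · rcases eq_or_ne i h.1 with rfl | hi
    · simp
    · simpa [update_of_ne hi] using hle i
  · have hMi : p.2.1 i ≤ p.1 i := hle i
    simp only [update_apply]
    split_ifs with hic hih hih
    · have := hch.2
      omega
    · rw [hic] at hMi ⊢
      omega
    · rw [hih]
      omega
    · exact hle i

lemma firstRow_eq (hs : SlideRel p q) (h1 : q.2.1 1 = p.2.1 1) :
    q.1 1 = p.1 1 ∧ ∀ j, q.2.2 (1, j) = p.2.2 (1, j) := by
  obtain ⟨c, h, hc, hch, -, -, hL, hM, hU⟩ := hs.exists_corners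
  have hc1 := hc.two_le_fst (by rwa [hM] at h1)
  have hh1 := hc1.trans hch.1
  exact ⟨by rw [hL, update_of_ne (by omega)], fun j => hU (1, j) (by dsimp only; omega)⟩

lemma tailSum_eq (hs : SlideRel p q) (hfin : (support p.1).Finite) (hle : p.2.1 ≤ p.1)
    (h1 : q.2.1 1 = p.2.1 1) : tailSum q.1 q.2.1 = tailSum p.1 p.2.1 := by
  obtain ⟨c, h, hc, hch, hh, hhL, hL, hM, -⟩ := hs.exists_corners
  have hc1 := hc.two_le_fst (by rwa [hM] at h1)
  obtain ⟨-, hc2, hcM, -⟩ := hc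
  rcases hh with rfl | ⟨-, hMh, -⟩
  · -- the hole never moved, so `c` is removed from both shapes
    have e := tailSum_update (M := p.2.1) hfin hc1 (h.2 - 1) (h.2 - 1)
    rw [← hL, ← hM] at e
    omega
  · have hq : (support q.1).Finite := hfin.subset (support_subset_of_le hs.outer_le)
    have hqc : p.2.1 c.1 ≤ q.1 c.1 := by
      rw [hL, update_apply]
      split_ifs with e
      · rw [e]
        omega
      · exact hle c.1
    have e1 := tailSum_update (M := p.2.1) hq hc1 (q.1 c.1) (c.2 - 1)
    rw [update_eq_self, ← hM] at e1
    have e2 := tailSum_update (M := p.2.1) hfin (hc1.trans hch.1) (h.2 - 1) (p.2.1 h.1)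
    rw [update_eq_self, ← hL] at e2
    omega

lemma outer_le_of_reflTransGen (hpq : ReflTransGen SlideRel p q) : q.1 ≤ p.1 := by
  induction hpq with
  | refl => exact le_rfl
  | tail _ hrq ih => exact hrq.outer_le.trans ih

lemma inner_le_of_reflTransGen (hpq : ReflTransGen SlideRel p q) : q.2.1 ≤ p.2.1 := by
  induction hpq with
  | refl => exact le_rfl
  | tail _ hrq ih => exact hrq.inner_le.trans ih

lemma inner_le_outer_of_reflTransGen (hpq : ReflTransGen SlideRel p q) (hle : p.2.1 ≤ p.1) :
    q.2.1 ≤ q.1 := by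
  induction hpq with
  | refl => exact hle
  | tail _ hrq ih => exact hrq.inner_le_outer ih

lemma inner_one_eq_of_reflTransGen_of_slideRel {r : (ℕ → ℕ) × (ℕ → ℕ) × (ℕ × ℕ → α)}
    (hpr : ReflTransGen SlideRel p r) (hrq : SlideRel r q) (h1 : q.2.1 1 = p.2.1 1) :
    q.2.1 1 = r.2.1 1 :=
  le_antisymm (hrq.inner_le 1) (h1 ▸ inner_le_of_reflTransGen hpr 1)

lemma firstRow_eq_of_reflTransGen (hpq : ReflTransGen SlideRel p q)
    (h1 : q.2.1 1 = p.2.1 1) : q.1 1 = p.1 1 ∧ ∀ j, q.2.2 (1, j) = p.2.2 (1, j) := by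
  induction hpq with
  | refl => exact ⟨rfl, fun _ => rfl⟩
  | tail hpr hrq ih =>
    have hqr := inner_one_eq_of_reflTransGen_of_slideRel hpr hrq h1
    obtain ⟨hL, hU⟩ := ih (hqr ▸ h1)
    obtain ⟨hL', hU'⟩ := hrq.firstRow_eq hqr
    exact ⟨hL'.trans hL, fun j => (hU' j).trans (hU j)⟩

lemma tailSum_eq_of_reflTransGen (hpq : ReflTransGen SlideRel p q)
    (hfin : (support p.1).Finite) (hle : p.2.1 ≤ p.1) (h1 : q.2.1 1 = p.2.1 1) :
    tailSum q.1 q.2.1 = tailSum p.1 p.2.1 := by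
  induction hpq with
  | refl => rfl
  | tail hpr hrq ih =>
    have hqr := inner_one_eq_of_reflTransGen_of_slideRel hpr hrq h1
    have hrfin := hfin.subset (support_subset_of_le (outer_le_of_reflTransGen hpr))
    exact (hrq.tailSum_eq hrfin (inner_le_outer_of_reflTransGen hpr hle) hqr).trans
      (ih (hqr ▸ h1))

end SlideRel

theorem slides_below_first_row_general {α : Type*} [LinearOrder α] (lam mu psi mu' : ℕ → ℕ)
    (T T' : ℕ × ℕ → α)
    (hlam : IsPartition lam) (hsub : ∀ i, mu i ≤ lam i)
    (hchain : Relation.ReflTransGen SlideRel (lam, mu, T) (psi, mu', T'))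
    (hmu'1 : mu' 1 = mu 1) (hmu'rest : ∀ i, 2 ≤ i → mu' i = 0) :
    psi 2 ≤ min (lam 2) (tailSum lam mu) ∧ psi 1 = lam 1 ∧
      ∀ j, mu 1 < j → j ≤ lam 1 → T' (1, j) = T (1, j) := by
  obtain ⟨hpsi1, hrow⟩ := SlideRel.firstRow_eq_of_reflTransGen hchain hmu'1
  have hpsi_le : psi ≤ lam := SlideRel.outer_le_of_reflTransGen hchain
  have hpsi_fin : (support psi).Finite := hlam.support_finite.subset (support_subset_of_le hpsi_le)
  refine ⟨le_min (hpsi_le 2) ?_, hpsi1, fun j _ _ => hrow j⟩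
  calc psi 2 = psi 2 - mu' 2 := by rw [hmu'rest 2 le_rfl, Nat.sub_zero]
    _ ≤ tailSum psi mu' := le_tailSum hpsi_fin le_rfl
    _ = tailSum lam mu :=
      SlideRel.tailSum_eq_of_reflTransGen hchain hlam.support_finite hsub hmu'1

theorem slides_below_first_row {α : Type*} [LinearOrder α] (lam mu psi mu' : ℕ → ℕ)
    (T T' : ℕ × ℕ → α)
    (hlam : IsPartition lam) (hmu : IsPartition mu) (hsub : ∀ i, mu i ≤ lam i)
    (hT : IsSSYT lam mu T) (hinj : Set.InjOn T (cells lam mu))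
    (hchain : Relation.ReflTransGen SlideRel (lam, mu, T) (psi, mu', T'))
    (hmu'1 : mu' 1 = mu 1) (hmu'rest : ∀ i, 2 ≤ i → mu' i = 0) :
    psi 2 ≤ min (lam 2) (tailSum lam mu) ∧ psi 1 = lam 1 ∧
      ∀ j, mu 1 < j → j ≤ lam 1 → T' (1, j) = T (1, j) :=
  slides_below_first_row_general lam mu psi mu' T T' hlam hsub hchain hmu'1 hmu'rest
end
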